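/- arXiv:math/0212196 — 2 statements merged into one kernel-verified Lean document; each statement's English description precedes it below -/
import Mathlib

section
/- For every n ≥ 1, the Ratliff-Rush closure of the filtration with respect to K satisfies rr_K(I_n) = ⋃_{k≥1} (K·I_{nk+n} : I_n^k); that is, the union over k of the colon ideals (K·I_{n+k} : I_1^k) equals the union over k of the colon ideals (K·I_{nk+n} : I_n^k). -/
/-!
Both inclusions enlarge a colon ideal: if `x B ⊆ J`, `C ⊆ B D` and `J D ⊆ E`, then `x C ⊆ E`.
For `⊇`, `I_1 ^ (n(j+1)+1) ⊆ I_n ^ (j+1) I_1`. For `⊆`, once the filtration is stable from `N` on,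
`I_(m+k+1) = I_1 ^ (k+1) I_m` for `m ≥ N`, so `I_n ^ (j+1) ⊆ I_(n(j+1)) ⊆ I_1 ^ (k+1) I_m`
as soon as `n(j+1) ≥ N + k + 1`.
-/

open IsLocalRing Polynomial

/-- Ratliff–Rush closure of a filtration `{I_n}` with respect to `K`:
`rr_K(I_n) = ⋃_{k ≥ 1} (K·I_{n+k} : I_1^k)`. -/
noncomputable def rrK {R : Type*} [CommRing R] (K : Ideal R) (I : ℕ → Ideal R) (n : ℕ) :
    Ideal R :=
  ⨆ k : ℕ, Submodule.colon (K * I (n + (k + 1))) (((I 1) ^ (k + 1) : Ideal R) : Set R)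

theorem Ideal.colon_le_colon_of_le_mul {R : Type*} [CommRing R] {J E B C D : Ideal R}
    (hC : C ≤ B * D) (hE : J * D ≤ E) : J.colon (B : Set R) ≤ E.colon (C : Set R) := by
  intro r hr
  rw [Submodule.mem_colon_iff_le, ← Submodule.ideal_span_singleton_smul, smul_eq_mul] at hr ⊢
  calc span {r} * C ≤ span {r} * B * D := by rw [mul_assoc]; exact Ideal.mul_mono_right hC
    _ ≤ J * D := Ideal.mul_mono_left hr
    _ ≤ E := hE

section Filtration

variable {R : Type*} [CommRing R] {I : ℕ → Ideal R}

theorem pow_le_of_mul_le_add (hmul : ∀ m n, I m * I n ≤ I (m + n)) (j : ℕ) {m : ℕ} (hm : m ≠ 0) :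
    I j ^ m ≤ I (j * m) := by
  obtain ⟨m, rfl⟩ := Nat.exists_eq_succ_of_ne_zero hm
  clear hm
  induction m with
  | zero => simp
  | succ m ih =>
    rw [pow_succ, Nat.mul_succ]
    exact (Ideal.mul_mono_left ih).trans (hmul _ _)

theorem add_eq_pow_mul_of_stable {N : ℕ} (hN : ∀ n ≥ N, I 1 * I n = I (n + 1)) (q : ℕ)
    {m : ℕ} (hm : N ≤ m) : I (m + q) = I 1 ^ q * I m := by
  induction q with
  | zero => simp
  | succ q ih => rw [← add_assoc, ← hN _ (by omega), ih, pow_succ, mul_assoc, mul_left_comm]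

variable (K : Ideal R) {n : ℕ}

theorem rrK_le_iSup_colon_pow (hmul : ∀ m n, I m * I n ≤ I (m + n)) {N : ℕ}
    (hN : ∀ n ≥ N, I 1 * I n = I (n + 1)) (hn : 1 ≤ n) :
    rrK K I n ≤
      ⨆ j : ℕ, Submodule.colon (K * I (n * (j + 1) + n)) ((I n ^ (j + 1) : Ideal R) : Set R) := by
  refine iSup_mono' fun k => ?_
  have hk : N + k + 1 ≤ n * (N + k + 1) := Nat.le_mul_of_pos_left _ hn
  obtain ⟨m, hm⟩ : ∃ m, n * (N + k + 1) = m + (k + 1) := ⟨n * (N + k + 1) - (k + 1), by omega⟩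
  refine ⟨N + k, Ideal.colon_le_colon_of_le_mul (D := I m) ?_ ?_⟩
  · calc I n ^ (N + k + 1) ≤ I (n * (N + k + 1)) := pow_le_of_mul_le_add hmul n (by omega)
      _ = I 1 ^ (k + 1) * I m := hm ▸ add_eq_pow_mul_of_stable hN _ (by omega)
  · rw [mul_assoc]
    refine Ideal.mul_mono_right ((hmul _ _).trans (le_of_eq (congrArg I ?_)))
    omega

theorem iSup_colon_pow_le_rrK (hmul : ∀ m n, I m * I n ≤ I (m + n)) (hn : n ≠ 0) :
    ⨆ j : ℕ, Submodule.colon (K * I (n * (j + 1) + n)) ((I n ^ (j + 1) : Ideal R) : Set R) ≤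
      rrK K I n := by
  refine iSup_mono' fun j => ⟨n * (j + 1), Ideal.colon_le_colon_of_le_mul (D := I 1) ?_ ?_⟩
  · rw [pow_succ, pow_mul]
    have h1n : I 1 ^ n ≤ I n := by simpa using pow_le_of_mul_le_add hmul 1 hn
    exact Ideal.mul_mono (Ideal.pow_right_mono h1n _) (by simp)
  · rw [mul_assoc, ← add_assoc, add_comm n]
    exact Ideal.mul_mono_right (hmul _ _)

end Filtration

theorem stmt0_general {R : Type*} [CommRing R]
    (I : ℕ → Ideal R) (K : Ideal R)
    (hImul : ∀ m n : ℕ, I m * I n ≤ I (m + n))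
    (hIstab : ∃ N : ℕ, ∀ n ≥ N, I 1 * I n = I (n + 1)) :
    ∀ n : ℕ, 1 ≤ n →
      rrK K I n =
        ⨆ k : ℕ, Submodule.colon (K * I (n * (k + 1) + n)) (((I n) ^ (k + 1) : Ideal R) : Set R) := by
  intro n hn
  obtain ⟨N, hN⟩ := hIstab
  exact le_antisymm (rrK_le_iSup_colon_pow K hImul hN hn)
    (iSup_colon_pow_le_rrK K hImul (by omega))

/-- For a Hilbert filtration `{I_n}` of a Noetherian local ring of positive dimension and
an ideal `K` with `I_{n+1} ⊆ K·I_n` for all `n`, the Ratliff–Rush closure with respect to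
`K` satisfies `rr_K(I_n) = ⋃_{k ≥ 1} (K·I_{nk+n} : I_n^k)` for every `n ≥ 1`. -/
theorem stmt0 {R : Type*} [CommRing R] [IsNoetherianRing R] [IsLocalRing R]
    (hdim : (0 : WithBot ℕ∞) < ringKrullDim R)
    (I : ℕ → Ideal R) (K : Ideal R)
    (hI0 : I 0 = ⊤)
    (hImul : ∀ m n : ℕ, I m * I n ≤ I (m + n))
    (hIstab : ∃ N : ℕ, ∀ n ≥ N, I 1 * I n = I (n + 1))
    (hIprim : (I 1).radical = maximalIdeal R)
    (hK : ∀ n : ℕ, I (n + 1) ≤ K * I n) :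
    ∀ n : ℕ, 1 ≤ n →
      rrK K I n =
        ⨆ k : ℕ, Submodule.colon (K * I (n * (k + 1) + n)) (((I n) ^ (k + 1) : Ideal R) : Set R) :=
  stmt0_general I K hImul hIstab
end

section
/- If J is a minimal reduction of I_1, then rr_K(I_n) : J = rr_K(I_{n−1}) for all n ≥ 1. -/
set_option synthInstance.maxHeartbeats 1000000
set_option maxHeartbeats 1000000

open IsLocalRing Polynomial

def IsReduction {R : Type*} [CommRing R] (J I : Ideal R) : Prop :=
  J ≤ I ∧ ∃ n : ℕ, J * I ^ n = I ^ (n + 1)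

def IsMinimalReduction {R : Type*} [CommRing R] (J I : Ideal R) : Prop :=
  IsReduction J I ∧ ∀ J' : Ideal R, IsReduction J' I → J' ≤ J → J' = J

/-!
Since `J ⊆ I₁`, multiplying by `J` carries `rr_K(I_n)` into `rr_K(I_{n+1})`. Conversely, in a
Noetherian ring the increasing union defining `rr_K(I_{n+1})` is attained at a single colon ideal
`(K·I_{n+k+1} : I₁^{k+1})`; if `xJ` lies in it and `J·I₁^r = I₁^{r+1}`, then
`x·I₁^{r+k+2} = xJ·I₁^{k+1}·I₁^r ⊆ K·I_{n+r+k+2}`, so `x ∈ rr_K(I_n)`.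
-/

namespace Ideal

variable {R : Type*} [CommRing R]

theorem le_colon_iff_mul_le {X N P : Ideal R} : X ≤ N.colon (P : Set R) ↔ X * P ≤ N := by
  rw [Ideal.mul_le]
  simp only [SetLike.le_def, Submodule.mem_colon, smul_eq_mul, SetLike.mem_coe]

end Ideal

section RatliffRush

variable {R : Type*} [CommRing R] {I : ℕ → Ideal R}

def rrKStage (K : Ideal R) (I : ℕ → Ideal R) (n k : ℕ) : Ideal R :=
  Submodule.colon (K * I (n + (k + 1))) (((I 1) ^ (k + 1) : Ideal R) : Set R)

theorem rrK_eq_iSup_rrKStage (K : Ideal R) (n : ℕ) : rrK K I n = ⨆ k, rrKStage K I n k := rfl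

variable (hImul : ∀ m n : ℕ, I m * I n ≤ I (m + n)) (K : Ideal R)
include hImul

theorem mul_mul_pow_le {a m b : ℕ} (hb : a + m = b) : K * I a * I 1 ^ m ≤ K * I b := by
  subst hb
  induction m with
  | zero => simp
  | succ m ih =>
    rw [pow_succ, ← mul_assoc]
    calc K * I a * I 1 ^ m * I 1 ≤ K * I (a + m) * I 1 := Ideal.mul_mono_left ih
      _ = K * (I (a + m) * I 1) := mul_assoc _ _ _
      _ ≤ K * I (a + (m + 1)) := Ideal.mul_mono_right (hImul _ 1)

theorem rrKStage_monotone (n : ℕ) : Monotone (rrKStage K I n) := by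
  refine monotone_nat_of_le_succ fun k => Ideal.le_colon_iff_mul_le.mpr ?_
  calc rrKStage K I n k * I 1 ^ (k + 1 + 1) = rrKStage K I n k * I 1 ^ (k + 1) * I 1 ^ 1 := by
        rw [mul_assoc, ← pow_add]
    _ ≤ K * I (n + (k + 1)) * I 1 ^ 1 :=
        Ideal.mul_mono_left (Ideal.le_colon_iff_mul_le.mp le_rfl)
    _ ≤ K * I (n + (k + 1 + 1)) := mul_mul_pow_le hImul K (by omega)

theorem rrKStage_mul_le (n k : ℕ) : rrKStage K I n k * I 1 ≤ rrKStage K I (n + 1) k := by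
  refine Ideal.le_colon_iff_mul_le.mpr ?_
  calc rrKStage K I n k * I 1 * I 1 ^ (k + 1) = rrKStage K I n k * I 1 ^ (k + 1) * I 1 ^ 1 := by
        rw [pow_one, mul_right_comm]
    _ ≤ K * I (n + (k + 1)) * I 1 ^ 1 :=
        Ideal.mul_mono_left (Ideal.le_colon_iff_mul_le.mp le_rfl)
    _ ≤ K * I (n + 1 + (k + 1)) := mul_mul_pow_le hImul K (by omega)

theorem rrK_mul_le (n : ℕ) : rrK K I n * I 1 ≤ rrK K I (n + 1) := by
  rw [rrK_eq_iSup_rrKStage, Submodule.iSup_mul]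
  exact iSup_le fun k => (rrKStage_mul_le hImul K n k).trans (le_iSup (rrKStage K I (n + 1)) k)

theorem exists_rrK_eq_rrKStage [IsNoetherianRing R] (n : ℕ) :
    ∃ k, rrK K I n = rrKStage K I n k :=
  ⟨_, WellFoundedGT.iSup_eq_monotonicSequenceLimit ⟨rrKStage K I n, rrKStage_monotone hImul K n⟩⟩

theorem le_rrK_of_mul_le_rrK_succ [IsNoetherianRing R] {J X : Ideal R} {r : ℕ}
    (hJ : J * I 1 ^ r = I 1 ^ (r + 1)) {n : ℕ} (hX : X * J ≤ rrK K I (n + 1)) :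
    X ≤ rrK K I n := by
  obtain ⟨k, hk⟩ := exists_rrK_eq_rrKStage hImul K (n + 1)
  rw [hk] at hX
  refine le_trans ?_ (le_iSup (rrKStage K I n) (r + k + 1))
  refine Ideal.le_colon_iff_mul_le.mpr ?_
  calc X * I 1 ^ (r + k + 1 + 1) = X * J * I 1 ^ (k + 1) * I 1 ^ r := by
        rw [show r + k + 1 + 1 = (r + 1) + (k + 1) by omega, pow_add, ← hJ]; ring
    _ ≤ K * I (n + 1 + (k + 1)) * I 1 ^ r :=
        Ideal.mul_mono_left (Ideal.le_colon_iff_mul_le.mp hX)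
    _ ≤ K * I (n + (r + k + 1 + 1)) := mul_mul_pow_le hImul K (by omega)

end RatliffRush

theorem stmt3_general {R : Type*} [CommRing R] [IsNoetherianRing R]
    (I : ℕ → Ideal R) (K : Ideal R)
    (hImul : ∀ m n : ℕ, I m * I n ≤ I (m + n))
    (J : Ideal R) (hJ : IsMinimalReduction J (I 1)) :
    ∀ n : ℕ, Submodule.colon (rrK K I (n + 1)) J = rrK K I n := by
  obtain ⟨⟨hJle, r, hred⟩, -⟩ := hJ
  intro n
  apply le_antisymm
  · exact le_rrK_of_mul_le_rrK_succ hImul K hred (Ideal.le_colon_iff_mul_le.mp le_rfl)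
  · exact Ideal.le_colon_iff_mul_le.mpr
      ((Ideal.mul_mono_right hJle).trans (rrK_mul_le hImul K n))

/-- If `J` is a minimal reduction of `I_1`, then `rr_K(I_n) : J = rr_K(I_{n-1})` for all
`n ≥ 1`. -/
theorem stmt3 {R : Type*} [CommRing R] [IsNoetherianRing R] [IsLocalRing R]
    [Infinite (ResidueField R)]
    (hdim : (0 : WithBot ℕ∞) < ringKrullDim R)
    (I : ℕ → Ideal R) (K : Ideal R)
    (hI0 : I 0 = ⊤)
    (hImul : ∀ m n : ℕ, I m * I n ≤ I (m + n))
    (hIstab : ∃ N : ℕ, ∀ n ≥ N, I 1 * I n = I (n + 1))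
    (hIprim : (I 1).radical = maximalIdeal R)
    (hK : ∀ n : ℕ, I (n + 1) ≤ K * I n)
    (J : Ideal R) (hJ : IsMinimalReduction J (I 1)) :
    ∀ n : ℕ, Submodule.colon (rrK K I (n + 1)) J = rrK K I n :=
  stmt3_general I K hImul J hJ
end
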